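/- Let X ~ Bin(m,p) and Y ~ Bin(n,q) be independent, with m, n ≥ 2. Define T = (n(n-1)(X² - X) + m(m-1)(Y² - Y) - 2(m-1)(n-1)XY) / ((m-1)(n-1)(m+n)). Then E[T] = (mn/(m+n))·(p - q)². In particular E[T] = 0 when p = q. -/
import Mathlib

open Finset

lemma binom_sum (p : ℝ) (m : ℕ) :
    ∑ x ∈ range (m+1), (m.choose x : ℝ) * p ^ x * (1 - p) ^ (m - x) = 1 := by
  calc ∑ x ∈ range (m+1), (m.choose x : ℝ) * p ^ x * (1 - p) ^ (m - x)
      = ∑ x ∈ range (m+1), p ^ x * (1 - p) ^ (m - x) * (m.choose x : ℝ) := by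
        apply sum_congr rfl; intros; ring
    _ = (p + (1 - p)) ^ m := (add_pow _ _ _).symm
    _ = 1 := by norm_num

lemma choose_cast1 (s x : ℕ) : ((s+1).choose (x+1) : ℝ) * (x+1) = (s+1) * (s.choose x) := by
  exact_mod_cast congrArg (Nat.cast (R := ℝ)) (Nat.add_one_mul_choose_eq s x).symm

lemma moment1 (p : ℝ) (s : ℕ) :
    ∑ x ∈ range (s+1+1), ((s+1).choose x : ℝ) * p ^ x * (1 - p) ^ (s+1-x) * x
      = (s+1) * p := by
  rw [Finset.sum_range_succ']
  simp only [Nat.cast_zero, mul_zero, add_zero]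
  have : ∀ x ∈ range (s+1),
      ((s+1).choose (x+1) : ℝ) * p ^ (x+1) * (1 - p) ^ (s-x) * ((x:ℝ)+1)
      = ((s:ℝ)+1) * p * ((s.choose x : ℝ) * p ^ x * (1 - p) ^ (s-x)) := by
    intro x hx
    have h := choose_cast1 s x
    push_cast at h ⊢
    calc ((s+1).choose (x+1) : ℝ) * p ^ (x+1) * (1 - p) ^ (s-x) * ((x:ℝ)+1)
        = (((s+1).choose (x+1) : ℝ) * ((x:ℝ)+1)) * (p ^ (x+1) * (1 - p) ^ (s-x)) := by ring
      _ = (((s:ℝ)+1) * (s.choose x : ℝ)) * (p ^ (x+1) * (1 - p) ^ (s-x)) := by rw [h]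
      _ = ((s:ℝ)+1) * p * ((s.choose x : ℝ) * p ^ x * (1 - p) ^ (s-x)) := by ring
  rw [Finset.sum_congr rfl (fun x hx => by push_cast; exact_mod_cast this x hx), ← Finset.mul_sum, binom_sum]
  push_cast; ring

lemma moment2 (p : ℝ) (s : ℕ) :
    ∑ x ∈ range (s+2+1), ((s+2).choose x : ℝ) * p ^ x * (1 - p) ^ (s+2-x) * ((x:ℝ)^2 - x)
      = (s+2) * (s+1) * p^2 := by
  rw [Finset.sum_range_succ', Finset.sum_range_succ']
  norm_num
  have step : ∀ x ∈ range (s+1),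
      ((s+2).choose (x+1+1) : ℝ) * p ^ (x+1+1) * (1 - p) ^ (s-x) * (((x:ℝ)+1+1)^2 - ((x:ℝ)+1+1))
      = ((s:ℝ)+2) * ((s:ℝ)+1) * p^2 * ((s.choose x : ℝ) * p ^ x * (1 - p) ^ (s-x)) := by
    intro x hx
    have h1 : ((s+2).choose (x+2) : ℝ) * ((x:ℝ)+2) = ((s:ℝ)+2) * ((s+1).choose (x+1)) := by
      have := choose_cast1 (s+1) (x+1); push_cast at this ⊢; linarith
    have h2 : ((s+1).choose (x+1) : ℝ) * ((x:ℝ)+1) = ((s:ℝ)+1) * (s.choose x) := by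
      have := choose_cast1 s x; push_cast at this ⊢; linarith
    have key : ((s+2).choose (x+2) : ℝ) * (((x:ℝ)+2) * ((x:ℝ)+1))
        = ((s:ℝ)+2) * ((s:ℝ)+1) * (s.choose x) := by
      calc ((s+2).choose (x+2) : ℝ) * (((x:ℝ)+2) * ((x:ℝ)+1))
          = (((s+2).choose (x+2) : ℝ) * ((x:ℝ)+2)) * ((x:ℝ)+1) := by ring
        _ = ((s:ℝ)+2) * (((s+1).choose (x+1) : ℝ) * ((x:ℝ)+1)) := by rw [h1]; ring
        _ = ((s:ℝ)+2) * ((s:ℝ)+1) * (s.choose x) := by rw [h2]; ring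
    have e : (((x:ℝ)+1+1)^2 - ((x:ℝ)+1+1)) = ((x:ℝ)+2) * ((x:ℝ)+1) := by ring
    rw [show x+1+1 = x+2 from rfl, e]
    calc ((s+2).choose (x+2) : ℝ) * p ^ (x+2) * (1 - p) ^ (s-x) * (((x:ℝ)+2) * ((x:ℝ)+1))
        = (((s+2).choose (x+2) : ℝ) * (((x:ℝ)+2) * ((x:ℝ)+1))) * (p ^ (x+2) * (1 - p) ^ (s-x)) := by ring
      _ = (((s:ℝ)+2) * ((s:ℝ)+1) * (s.choose x)) * (p ^ (x+2) * (1 - p) ^ (s-x)) := by rw [key]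
      _ = ((s:ℝ)+2) * ((s:ℝ)+1) * p^2 * ((s.choose x : ℝ) * p ^ x * (1 - p) ^ (s-x)) := by ring
  rw [Finset.sum_congr rfl (fun x hx => by push_cast; exact_mod_cast step x hx),
    ← Finset.mul_sum, binom_sum]
  push_cast; ring

lemma hsep {N M : ℕ} (f g : ℕ → ℝ) (c : ℝ) :
    ∑ x ∈ range N, ∑ y ∈ range M, c * (f x * g y)
      = c * ((∑ x ∈ range N, f x) * (∑ y ∈ range M, g y)) := by
  rw [Finset.sum_mul_sum, Finset.mul_sum]
  exact Finset.sum_congr rfl fun x _ => by rw [Finset.mul_sum]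

/-- Expectation of the general per-pair test statistic with sample sizes `m`, `n`. -/
theorem binomial_test_statistic_expectation_general (m n : ℕ) (hm : 2 ≤ m) (hn : 2 ≤ n)
    (p q : ℝ) (hp : p ∈ Set.Icc (0:ℝ) 1) (hq : q ∈ Set.Icc (0:ℝ) 1) :
    ∑ x ∈ range (m+1), ∑ y ∈ range (n+1),
      (((m.choose x : ℝ) * p ^ x * (1 - p) ^ (m - x)) *
       ((n.choose y : ℝ) * q ^ y * (1 - q) ^ (n - y)) *
       (((n : ℝ) * ((n : ℝ) - 1) * ((x : ℝ)^2 - (x : ℝ))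
         + (m : ℝ) * ((m : ℝ) - 1) * ((y : ℝ)^2 - (y : ℝ))
         - 2 * ((m : ℝ) - 1) * ((n : ℝ) - 1) * (x : ℝ) * (y : ℝ))
        / (((m : ℝ) - 1) * ((n : ℝ) - 1) * ((m : ℝ) + (n : ℝ)))))
    = ((m : ℝ) * (n : ℝ) / ((m : ℝ) + (n : ℝ))) * (p - q)^2 := by
  obtain ⟨s, rfl⟩ : ∃ s, m = s + 2 := ⟨m - 2, by omega⟩
  obtain ⟨t, rfl⟩ : ∃ t, n = t + 2 := ⟨n - 2, by omega⟩
  set cA : ℝ := ((t:ℝ)+2) * ((t:ℝ)+1) / (((s:ℝ)+1) * ((t:ℝ)+1) * ((s:ℝ)+2+((t:ℝ)+2))) with hcA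
  set cB : ℝ := ((s:ℝ)+2) * ((s:ℝ)+1) / (((s:ℝ)+1) * ((t:ℝ)+1) * ((s:ℝ)+2+((t:ℝ)+2))) with hcB
  set cC : ℝ := 2 * ((s:ℝ)+1) * ((t:ℝ)+1) / (((s:ℝ)+1) * ((t:ℝ)+1) * ((s:ℝ)+2+((t:ℝ)+2))) with hcC
  have key : ∑ x ∈ range (s+2+1), ∑ y ∈ range (t+2+1),
      (((s+2).choose x : ℝ) * p ^ x * (1 - p) ^ (s+2 - x)) *
       (((t+2).choose y : ℝ) * q ^ y * (1 - q) ^ (t+2 - y)) *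
       ((((t:ℝ)+2) * (((t:ℝ)+2) - 1) * ((x : ℝ)^2 - (x : ℝ))
         + ((s:ℝ)+2) * (((s:ℝ)+2) - 1) * ((y : ℝ)^2 - (y : ℝ))
         - 2 * (((s:ℝ)+2) - 1) * (((t:ℝ)+2) - 1) * (x : ℝ) * (y : ℝ))
        / ((((s:ℝ)+2) - 1) * (((t:ℝ)+2) - 1) * (((s:ℝ)+2) + ((t:ℝ)+2))))
      = cA * ((∑ x ∈ range (s+2+1), (((s+2).choose x : ℝ) * p ^ x * (1 - p) ^ (s+2 - x)) * ((x:ℝ)^2 - x))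
              * (∑ y ∈ range (t+2+1), (((t+2).choose y : ℝ) * q ^ y * (1 - q) ^ (t+2 - y))))
        + cB * ((∑ x ∈ range (s+2+1), (((s+2).choose x : ℝ) * p ^ x * (1 - p) ^ (s+2 - x)))
              * (∑ y ∈ range (t+2+1), (((t+2).choose y : ℝ) * q ^ y * (1 - q) ^ (t+2 - y)) * ((y:ℝ)^2 - y)))
        - cC * ((∑ x ∈ range (s+2+1), (((s+2).choose x : ℝ) * p ^ x * (1 - p) ^ (s+2 - x)) * (x:ℝ))
              * (∑ y ∈ range (t+2+1), (((t+2).choose y : ℝ) * q ^ y * (1 - q) ^ (t+2 - y)) * (y:ℝ))) := by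
    rw [← hsep (fun x => (((s+2).choose x : ℝ) * p ^ x * (1 - p) ^ (s+2 - x)) * ((x:ℝ)^2 - x))
          (fun y => (((t+2).choose y : ℝ) * q ^ y * (1 - q) ^ (t+2 - y))) cA,
        ← hsep (fun x => (((s+2).choose x : ℝ) * p ^ x * (1 - p) ^ (s+2 - x)))
          (fun y => (((t+2).choose y : ℝ) * q ^ y * (1 - q) ^ (t+2 - y)) * ((y:ℝ)^2 - y)) cB,
        ← hsep (fun x => (((s+2).choose x : ℝ) * p ^ x * (1 - p) ^ (s+2 - x)) * (x:ℝ))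
          (fun y => (((t+2).choose y : ℝ) * q ^ y * (1 - q) ^ (t+2 - y)) * (y:ℝ)) cC,
        ← Finset.sum_add_distrib, ← Finset.sum_sub_distrib]
    apply Finset.sum_congr rfl; intro x _
    rw [← Finset.sum_add_distrib, ← Finset.sum_sub_distrib]
    apply Finset.sum_congr rfl; intro y _
    simp only [hcA, hcB, hcC]
    ring
  have h0p := binom_sum p (s+2)
  have h0q := binom_sum q (t+2)
  have h1p : ∑ x ∈ range (s+2+1), ((s+2).choose x : ℝ) * p ^ x * (1 - p) ^ (s+2-x) * (x:ℝ)
      = (((s+1:ℕ):ℝ)+1) * p := moment1 p (s+1)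
  have h1q : ∑ y ∈ range (t+2+1), ((t+2).choose y : ℝ) * q ^ y * (1 - q) ^ (t+2-y) * (y:ℝ)
      = (((t+1:ℕ):ℝ)+1) * q := moment1 q (t+1)
  have h2p := moment2 p s
  have h2q := moment2 q t
  push_cast at key h0p h0q h1p h1q h2p h2q ⊢
  rw [key]
  rw [h0p, h0q, h1p, h1q, h2p, h2q, hcA, hcB, hcC]
  have hs1 : ((s:ℝ)+1) ≠ 0 := by positivity
  have ht1 : ((t:ℝ)+1) ≠ 0 := by positivity
  have hmn : ((s:ℝ)+2+((t:ℝ)+2)) ≠ 0 := by positivity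
  field_simp
  ring
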